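/- arXiv:2008.08798 — 8 statements merged into one kernel-verified Lean document; each statement's English description precedes it below -/
import Mathlib

section
/- Let ε > 0 and define perturbed additive valuations v'_i by v'_i(g_j) = v_i(g_j) + ε·2^j. Then the perturbed instance is non-degenerate: for every agent i and all subsets S ≠ T of M, v'_i(S) ≠ v'_i(T), provided ε·2^(m+1) < δ where δ = min over agents i and sets S,T with v_i(S) ≠ v_i(T) of |v_i(S) − v_i(T)|. -/
/-!
The perturbation adds `ε · w(S)` to `v_i(S)`, where `w(S) = ∑_{g_j ∈ S} 2^(j+1)` is a natural
number below `2^(m+1)` that determines `S` (binary expansion). If `v'_i(S) = v'_i(T)`, then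
`v_i(S) - v_i(T) = ε (w(T) - w(S))`. Either `v_i(S) = v_i(T)`, and then `w(S) = w(T)`, so
`S = T`; or `δ ≤ |v_i(S) - v_i(T)| = ε |w(T) - w(S)| < ε · 2^(m+1) < δ`.
-/

open Finset

theorem Finset.geomSum_comp_injective {α : Type*} (e : α ↪ ℕ) {n : ℕ} (hn : 2 ≤ n) :
    Function.Injective (fun s : Finset α ↦ ∑ i ∈ s, n ^ e i) := fun _ _ h ↦
  map_injective e <| geomSum_injective hn <| by simpa only [sum_map] using h

def Fin.succValEmbedding (m : ℕ) : Fin m ↪ ℕ := (Fin.succEmb m).trans Fin.valEmbedding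

theorem Fin.sum_two_pow_succ_lt {m : ℕ} (S : Finset (Fin m)) :
    ∑ j ∈ S, 2 ^ ((j : ℕ) + 1) < 2 ^ (m + 1) := by
  simpa [Fin.succValEmbedding] using
    Nat.geomSum_lt le_rfl (s := S.map (Fin.succValEmbedding m)) (n := m + 1)
      (by simp [Fin.succValEmbedding])

/-- The perturbed instance `v'_i(g_j) = v_i(g_j) + ε·2^j` (with `ε·2^(m+1) < δ`)
is non-degenerate: distinct bundles have distinct values for every agent. -/
theorem perturbed_instance_nondegenerate {N : Type*} {m : ℕ}
    (v : N → Fin m → ℝ) (ε δ : ℝ) (hε : 0 < ε)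
    (hδ : ∀ i : N, ∀ S T : Finset (Fin m),
      (∑ g ∈ S, v i g) ≠ (∑ g ∈ T, v i g) →
      δ ≤ |(∑ g ∈ S, v i g) - (∑ g ∈ T, v i g)|)
    (hεδ : ε * 2 ^ (m + 1) < δ)
    (v' : N → Fin m → ℝ)
    (hv' : ∀ i : N, ∀ j : Fin m, v' i j = v i j + ε * 2 ^ ((j : ℕ) + 1)) :
    ∀ i : N, ∀ S T : Finset (Fin m), S ≠ T →
      (∑ g ∈ S, v' i g) ≠ (∑ g ∈ T, v' i g) := by
  intro i S T hST heq
  let w : Finset (Fin m) → ℕ := fun U ↦ ∑ j ∈ U, 2 ^ ((j : ℕ) + 1)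
  have perturbed_sum (U : Finset (Fin m)) : ∑ g ∈ U, v' i g = ∑ g ∈ U, v i g + ε * w U := by
    simp only [hv', sum_add_distrib, w]
    push_cast
    rw [mul_sum]
  have hdiff : ∑ g ∈ S, v i g - ∑ g ∈ T, v i g = ε * ((w T : ℝ) - w S) := by
    rw [perturbed_sum, perturbed_sum] at heq
    linarith
  by_cases hv : ∑ g ∈ S, v i g = ∑ g ∈ T, v i g
  · refine hST (Finset.geomSum_comp_injective (Fin.succValEmbedding m) le_rfl ?_)
    have hw : (w T : ℝ) = w S := by simpa [sub_eq_zero, hv, hε.ne'] using hdiff.symm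
    exact_mod_cast hw.symm
  · have hw : |(w T : ℝ) - w S| < 2 ^ (m + 1) :=
      abs_sub_lt_of_nonneg_of_lt (Nat.cast_nonneg _) (mod_cast Fin.sum_two_pow_succ_lt T)
        (Nat.cast_nonneg _) (mod_cast Fin.sum_two_pow_succ_lt S)
    have hgap := hδ i S T hv
    rw [hdiff, abs_mul, abs_of_pos hε] at hgap
    exact lt_irrefl δ (hgap.trans_lt ((mul_lt_mul_of_pos_left hw hε).trans hεδ))
end

section
/- Let X be an EFX allocation whose envy-graph E_X contains a directed cycle. Then there exists another EFX allocation Y such that the envy-graph E_Y is acyclic and Y Pareto dominates X. -/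
/-!
Among the reallocations `i ↦ X (σ i)` by permutations `σ` that make no agent worse off, take one
maximising the total utility `∑ i, v i (X (σ i))`. It stays EFX, since every agent is at least as
happy as before while the bundles are the old ones. An envy cycle contains a simple one, and
rotating bundles along a simple envy cycle is a Pareto improvement that strictly raises the total
utility. So the maximiser has an acyclic envy-graph, and, comparing it with the rotation along an
envy cycle of `X`, it makes some agent strictly better off.
-/

open Finset

section ClosedWalk

variable {N : Type*}

def HasClosedWalk (r : N → N → Prop) : Prop :=
  ∃ (k : ℕ) (c : Fin (k + 1) → N), ∀ t, r (c t) (c (t + 1))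

/-- If `c a = c b`, the first `b - a` steps of the walk restarted at `a` close up. -/
lemma exists_shorter_closedWalk {r : N → N → Prop} {k : ℕ} {c : Fin (k + 1) → N}
    (hc : ∀ t, r (c t) (c (t + 1))) (hinj : ¬ Function.Injective c) :
    ∃ m < k, ∃ d : Fin (m + 1) → N, ∀ t, r (d t) (d (t + 1)) := by
  obtain ⟨a, b, hab, hne⟩ : ∃ a b, c a = c b ∧ a ≠ b := by
    simpa [Function.Injective] using hinj
  set c' : Fin (k + 1) → N := fun t => c (t + a)
  have hc' : ∀ t, r (c' t) (c' (t + 1)) := fun t => by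
    simpa only [c', add_right_comm] using hc (t + a)
  set e := b - a
  have hce : c' e = c' 0 := by simp [c', e, hab]
  obtain ⟨m, hm⟩ : ∃ m, e.val = m + 1 :=
    Nat.exists_eq_succ_of_ne_zero (Fin.val_ne_zero_iff.mpr (sub_ne_zero.mpr hne.symm))
  have hmk : m + 1 ≤ k + 1 := hm ▸ e.isLt.le
  refine ⟨m, by omega, fun t => c' (Fin.castLE hmk t), fun t => ?_⟩
  have hstep : Fin.castLE hmk t + 1 = if t = Fin.last m then e else Fin.castLE hmk (t + 1) := by
    split_ifs with ht <;>
      simp only [Fin.ext_iff, Fin.val_add_one, Fin.val_castLE, Fin.val_last] at ht ⊢ <;>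
      split_ifs <;> omega
  have hr := hc' (Fin.castLE hmk t)
  rw [hstep] at hr
  split_ifs at hr with ht
  · simpa [ht, hce] using hr
  · exact hr

lemma exists_injective_closedWalk {r : N → N → Prop} (h : HasClosedWalk r) :
    ∃ (k : ℕ) (c : Fin (k + 1) → N), Function.Injective c ∧ ∀ t, r (c t) (c (t + 1)) := by
  obtain ⟨k, c, hc⟩ := h
  induction k using Nat.strong_induction_on with
  | _ k ih =>
    by_cases hinj : Function.Injective c
    · exact ⟨k, c, hinj, hc⟩
    · obtain ⟨m, hmk, d, hd⟩ := exists_shorter_closedWalk hc hinj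
      exact ih m hmk d hd

end ClosedWalk

section ParetoPerm

variable {N β : Type*} [Fintype N]
  [AddCommMonoid β] [LinearOrder β] [IsOrderedCancelAddMonoid β]

/-- Here `u i j` is agent `i`'s value for the bundle of agent `j`; `ρ` rotates the bundles along a
simple envy cycle. -/
lemma exists_perm_sum_lt_of_hasClosedWalk (u : N → N → β)
    (h : HasClosedWalk fun i j => u i i < u i j) :
    ∃ ρ : Equiv.Perm N, (∀ i, u i i ≤ u i (ρ i)) ∧ ∑ i, u i i < ∑ i, u i (ρ i) := by
  classical
  obtain ⟨k, c, hinj, hc⟩ := exists_injective_closedWalk h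
  let ρ := (finRotate (k + 1)).viaFintypeEmbedding ⟨c, hinj⟩
  have hρc : ∀ t, ρ (c t) = c (t + 1) := fun t => by
    simpa using Equiv.Perm.viaFintypeEmbedding_apply_image (finRotate (k + 1)) ⟨c, hinj⟩ t
  have hle : ∀ i, u i i ≤ u i (ρ i) := by
    intro i
    by_cases hi : i ∈ Set.range c
    · obtain ⟨t, rfl⟩ := hi
      exact hρc t ▸ (hc t).le
    · rw [Equiv.Perm.viaFintypeEmbedding_apply_notMem_range _ _ hi]
  exact ⟨ρ, hle, sum_lt_sum (fun i _ => hle i) ⟨c 0, mem_univ _, hρc 0 ▸ hc 0⟩⟩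

lemma exists_perm_pareto_acyclic (u : N → N → β) (h : HasClosedWalk fun i j => u i i < u i j) :
    ∃ σ : Equiv.Perm N, (∀ i, u i i ≤ u i (σ i)) ∧ (∃ i, u i i < u i (σ i)) ∧
      ¬ HasClosedWalk fun i j => u i (σ i) < u i (σ j) := by
  classical
  obtain ⟨σ, hσ, hmax⟩ :=
    (univ.filter fun σ : Equiv.Perm N => ∀ i, u i i ≤ u i (σ i)).exists_max_image
      (fun σ => ∑ i, u i (σ i)) ⟨1, by simp⟩
  replace hσ : ∀ i, u i i ≤ u i (σ i) := (mem_filter.mp hσ).2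
  replace hmax : ∀ τ : Equiv.Perm N, (∀ i, u i i ≤ u i (τ i)) →
      ∑ i, u i (τ i) ≤ ∑ i, u i (σ i) := fun τ hτ => hmax τ (by simpa using hτ)
  refine ⟨σ, hσ, ?_, fun hwalk => ?_⟩
  · by_contra! hnot
    obtain ⟨ρ, hρ, hlt⟩ := exists_perm_sum_lt_of_hasClosedWalk u h
    exact (hlt.trans_le ((hmax ρ hρ).trans (sum_le_sum fun i _ => hnot i))).false
  · obtain ⟨ρ, hρ, hlt⟩ := exists_perm_sum_lt_of_hasClosedWalk (fun i j => u i (σ j)) hwalk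
    exact (hmax (σ * ρ) fun i => (hσ i).trans (hρ i)).not_gt hlt

end ParetoPerm

/-- If `X` is an EFX allocation whose envy-graph contains a directed cycle, then there
is an EFX allocation `Y` (a reallocation of the same items) whose envy-graph is acyclic
and which Pareto dominates `X`. -/
theorem efx_cycle_elimination {N ι : Type*} [Fintype N] [DecidableEq ι]
    (v : N → Finset ι → ℝ) (X : N → Finset ι)
    (hdisj : ∀ i j : N, i ≠ j → Disjoint (X i) (X j))
    (hEFX : ∀ i j : N, ∀ g ∈ X j, v i ((X j).erase g) ≤ v i (X i))
    (hcyc : ∃ (k : ℕ) (c : Fin (k + 1) → N),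
      ∀ t : Fin (k + 1), v (c t) (X (c t)) < v (c t) (X (c (t + 1)))) :
    ∃ Y : N → Finset ι,
      (∀ i j : N, i ≠ j → Disjoint (Y i) (Y j)) ∧
      Finset.univ.biUnion Y = Finset.univ.biUnion X ∧
      (∀ i j : N, ∀ g ∈ Y j, v i ((Y j).erase g) ≤ v i (Y i)) ∧
      (¬ ∃ (k : ℕ) (c : Fin (k + 1) → N),
        ∀ t : Fin (k + 1), v (c t) (Y (c t)) < v (c t) (Y (c (t + 1)))) ∧
      (∀ i : N, v i (X i) ≤ v i (Y i)) ∧ (∃ j : N, v j (X j) < v j (Y j)) := by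
  obtain ⟨σ, hle, hlt, hacyclic⟩ := exists_perm_pareto_acyclic (fun i j => v i (X j)) hcyc
  refine ⟨fun i => X (σ i), fun i j hij => hdisj _ _ (σ.injective.ne hij), ?_,
    fun i j g hg => (hEFX i (σ j) g hg).trans (hle i), hacyclic, hle, hlt⟩
  ext x
  simp only [mem_biUnion, mem_univ, true_and]
  exact (σ.surjective.exists (p := fun i => x ∈ X i)).symm
end

section
/- Let X be a partial EFX allocation with unallocated item g such that the envy-graph E_X is acyclic, and suppose for every agent i there exists an agent j who would EFX envy i if i were given X_i ∪ {g}. If E_X has exactly one source, then there exists an EFX allocation Y Pareto dominating X. -/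
/-!
Acyclicity makes the envy relation well-founded, so walking backwards along envy edges from
any agent ends at a source; as the source `s` is unique, every agent `t` is reached from `s` by
a chain of envy. Among the subsets of `X s ∪ {g}` that somebody envies (one exists by
hypothesis) take an inclusion-minimal one `B`, the champion set, envied by `t`: nobody envies
`B` with an item removed. Now shift bundles along the envy path from `s` to `t`: each agent on
it takes the bundle it envies and `t` takes `B`. Nobody loses, `t` gains, and the result is
EFX since every bundle is an old bundle or `B`.
-/

open Finset

/-- Additive bundle value. -/
def val {ι : Type*} (v : ι → ℝ) (S : Finset ι) : ℝ := ∑ g ∈ S, v g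

/-- `i` envies `j` under allocation `X`. -/
def Envies {N ι : Type*} (v : N → ι → ℝ) (X : N → Finset ι) (i j : N) : Prop :=
  val (v i) (X i) < val (v i) (X j)

namespace Relation

variable {α : Type*} {r : α → α → Prop}

theorem TransGen.exists_fin_chain {a b : α} (h : TransGen r a b) :
    ∃ (k : ℕ) (c : Fin (k + 1) → α), c 0 = a ∧ r (c (Fin.last k)) b ∧
      ∀ i : Fin k, r (c i.castSucc) (c i.succ) := by
  induction h using TransGen.head_induction_on with
  | single hab => exact ⟨0, fun _ => _, rfl, hab, Fin.elim0⟩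
  | @head a b hab _ ih =>
    obtain ⟨k, c, hc0, hlast, hchain⟩ := ih
    refine ⟨k + 1, Fin.cons a c, rfl, by simpa [← Fin.succ_last] using hlast, ?_⟩
    intro i
    cases i using Fin.cases with
    | zero => simpa [← hc0] using hab
    | succ j => simpa [← Fin.succ_castSucc] using hchain j

theorem not_transGen_self_of_not_exists_cycle
    (hr : ¬ ∃ (k : ℕ) (c : Fin (k + 1) → α), ∀ t : Fin (k + 1), r (c t) (c (t + 1)))
    (a : α) : ¬ TransGen r a a := by
  intro ha
  obtain ⟨k, c, hc0, hlast, hchain⟩ := ha.exists_fin_chain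
  refine hr ⟨k, c, fun t => ?_⟩
  cases t using Fin.lastCases with
  | last => rwa [Fin.last_add_one, hc0]
  | cast i => rw [Fin.coeSucc_eq_succ]; exact hchain i

theorem wellFounded_of_not_transGen_self [Finite α] (hr : ∀ a, ¬ TransGen r a a) :
    WellFounded r :=
  have : IsTrans α (TransGen r) := ⟨fun _ _ _ => TransGen.trans⟩
  have : Std.Irrefl (TransGen r) := ⟨hr⟩
  Subrelation.wf (fun h => TransGen.single h) (Finite.wellFounded_of_trans_of_irrefl _)

theorem reflTransGen_of_unique_source (hr : WellFounded r) {s : α}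
    (hs : ∀ x, (∀ a, ¬ r a x) → x = s) (t : α) : ReflTransGen r s t := by
  induction t using hr.induction with
  | _ x ih =>
    by_cases hx : ∀ a, ¬ r a x
    · rw [← hs x hx]
    · obtain ⟨a, ha⟩ := not_forall_not.mp hx
      exact (ih a ha).tail ha

/-- The extra conjunct `ReflTransGen r a t` is the invariant that keeps the path simple. -/
theorem ReflTransGen.exists_perm_shift [DecidableEq α] (hr : ∀ a, ¬ TransGen r a a)
    {s t : α} (h : ReflTransGen r s t) :
    ∃ σ : Equiv.Perm α, σ t = s ∧
      ∀ a, a ≠ t → σ a = a ∨ (r a (σ a) ∧ ReflTransGen r a t) := by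
  induction h with
  | refl => exact ⟨1, rfl, fun a _ => Or.inl rfl⟩
  | @tail b c _ hbc ih =>
    obtain ⟨σ, hσb, hσ⟩ := ih
    have hbc_ne : b ≠ c := by rintro rfl; exact hr b (.single hbc)
    have hσc : σ c = c := by
      rcases hσ c hbc_ne.symm with hc | ⟨-, hct⟩
      · exact hc
      · exact absurd (TransGen.tail' hct hbc) (hr c)
    refine ⟨(Equiv.swap b c).trans σ, by simp [hσb], fun a hac => ?_⟩
    by_cases hab : a = b
    · subst hab
      simp only [Equiv.trans_apply, Equiv.swap_apply_left, hσc]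
      exact .inr ⟨hbc, .single hbc⟩
    · simp only [Equiv.trans_apply, Equiv.swap_apply_of_ne_of_ne hab hac]
      rcases hσ a hab with ha | ⟨ha, hat⟩
      · exact .inl ha
      · exact .inr ⟨ha, hat.tail hbc⟩

end Relation

section Allocation

open Function

variable {N ι : Type*}

theorem pairwise_disjoint_update_comp_perm [DecidableEq N] {X : N → Finset ι}
    (hX : Pairwise (Disjoint on X)) {σ : Equiv.Perm N} {s t : N} (hσt : σ t = s)
    {B : Finset ι} (hB : ∀ c, c ≠ s → Disjoint B (X c)) :
    Pairwise (Disjoint on update (X ∘ σ) t B) := by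
  have hσ : ∀ l, l ≠ t → σ l ≠ s := fun l hl h => hl (σ.injective (h.trans hσt.symm))
  intro k l hkl
  rcases eq_or_ne k t with rfl | hk
  · simpa [onFun, hkl.symm] using hB _ (hσ l hkl.symm)
  rcases eq_or_ne l t with rfl | hl
  · simpa [onFun, hk] using (hB _ (hσ k hk)).symm
  · simpa [onFun, hk, hl] using hX (σ.injective.ne hkl)

variable [DecidableEq ι]

theorem exists_champion_subset (v : N → ι → ℝ) (X : N → Finset ι) {T : Finset ι} {j : N}
    (hj : val (v j) (X j) < val (v j) T) :
    ∃ B ⊆ T, (∃ t, val (v t) (X t) < val (v t) B) ∧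
      ∀ h ∈ B, ∀ a, val (v a) (B.erase h) ≤ val (v a) (X a) := by
  obtain ⟨B, hBT, hBmin⟩ := exists_minimal_le_of_wellFoundedLT
    (fun S => ∃ a, val (v a) (X a) < val (v a) S) T ⟨j, hj⟩
  exact ⟨B, hBT, hBmin.prop, fun h hh a => not_lt.mp fun ha =>
    hBmin.not_prop_of_lt (erase_ssubset hh) ⟨a, ha⟩⟩

theorem exists_pareto_improvement_of_champion_path (v : N → ι → ℝ) {M' : Finset ι}
    {X : N → Finset ι} (hXsub : ∀ i, X i ⊆ M') (hdisj : Pairwise (Disjoint on X))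
    (hEFX : ∀ i j, ∀ h ∈ X j, val (v i) ((X j).erase h) ≤ val (v i) (X i))
    {g : ι} (hg : g ∉ M') {s t : N} {σ : Equiv.Perm N} (hσt : σ t = s)
    (hσ : ∀ a, a ≠ t → σ a = a ∨ Envies v X a (σ a))
    {B : Finset ι} (hBsub : B ⊆ insert g (X s)) (htB : val (v t) (X t) < val (v t) B)
    (hBmin : ∀ h ∈ B, ∀ a, val (v a) (B.erase h) ≤ val (v a) (X a)) :
    ∃ Y : N → Finset ι,
      (∀ k, Y k ⊆ insert g M') ∧
      (∀ k l, k ≠ l → Disjoint (Y k) (Y l)) ∧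
      (∀ k l, ∀ h ∈ Y l, val (v k) ((Y l).erase h) ≤ val (v k) (Y k)) ∧
      (∀ k, val (v k) (X k) ≤ val (v k) (Y k)) ∧
      (∃ k, val (v k) (X k) < val (v k) (Y k)) := by
  classical
  set Y := update (X ∘ σ) t B
  have hYt : Y t = B := update_self ..
  have hY : ∀ a, a ≠ t → Y a = X (σ a) := fun a ha => update_of_ne ha ..
  have hBdisj : ∀ c, c ≠ s → Disjoint B (X c) := fun c hc =>
    disjoint_of_subset_left hBsub <| disjoint_insert_left.mpr
      ⟨fun hgc => hg (hXsub c hgc), hdisj hc.symm⟩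
  have hXY : ∀ k, val (v k) (X k) ≤ val (v k) (Y k) := by
    intro k
    rcases eq_or_ne k t with rfl | hk
    · exact hYt ▸ htB.le
    · rcases hσ k hk with hσk | hσk
      · rw [hY k hk, hσk]
      · exact hY k hk ▸ hσk.le
  refine ⟨Y, fun k => ?_, fun k l hkl => pairwise_disjoint_update_comp_perm hdisj hσt hBdisj hkl,
    fun k l h hh => ?_, hXY, t, hYt ▸ htB⟩
  · rcases eq_or_ne k t with rfl | hk
    · exact hYt ▸ hBsub.trans (insert_subset_insert g (hXsub s))
    · exact hY k hk ▸ (hXsub (σ k)).trans (subset_insert g M')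
  · refine le_trans ?_ (hXY k)
    rcases eq_or_ne l t with rfl | hl
    · rw [hYt] at hh ⊢
      exact hBmin h hh k
    · rw [hY l hl] at hh ⊢
      exact hEFX k (σ l) h hh

end Allocation

theorem one_source_pareto_improvement_general {N ι : Type*} [Fintype N] [DecidableEq ι]
    (v : N → ι → ℝ)
    (M' : Finset ι) (X : N → Finset ι)
    (hXsub : ∀ i : N, X i ⊆ M')
    (hdisj : ∀ i j : N, i ≠ j → Disjoint (X i) (X j))
    (hEFX : ∀ i j : N, ∀ h ∈ X j, val (v i) ((X j).erase h) ≤ val (v i) (X i))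
    (g : ι) (hg : g ∉ M')
    (hacyc : ¬ ∃ (k : ℕ) (c : Fin (k + 1) → N),
      ∀ t : Fin (k + 1), Envies v X (c t) (c (t + 1)))
    (henvy : ∀ i : N, ∃ j : N, ∃ h ∈ insert g (X i),
      val (v j) (X j) < val (v j) ((insert g (X i)).erase h))
    (hsource : ∃! s : N, ∀ j : N, ¬ Envies v X j s) :
    ∃ Y : N → Finset ι,
      (∀ k : N, Y k ⊆ insert g M') ∧
      (∀ k l : N, k ≠ l → Disjoint (Y k) (Y l)) ∧
      (∀ k l : N, ∀ h ∈ Y l, val (v k) ((Y l).erase h) ≤ val (v k) (Y k)) ∧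
      (∀ k : N, val (v k) (X k) ≤ val (v k) (Y k)) ∧
      (∃ k : N, val (v k) (X k) < val (v k) (Y k)) := by
  classical
  obtain ⟨s, -, hs⟩ := hsource
  have hirr := Relation.not_transGen_self_of_not_exists_cycle hacyc
  have hreach := Relation.reflTransGen_of_unique_source
    (Relation.wellFounded_of_not_transGen_self hirr) hs
  obtain ⟨j, h, -, hj⟩ := henvy s
  obtain ⟨B, hBsub, ⟨t, htB⟩, hBmin⟩ := exists_champion_subset v X hj
  obtain ⟨σ, hσt, hσ⟩ := (hreach t).exists_perm_shift hirr
  exact exists_pareto_improvement_of_champion_path v hXsub (fun i j => hdisj i j) hEFX hg hσt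
    (fun a ha => (hσ a ha).imp_right And.left) (hBsub.trans (erase_subset h _)) htB hBmin

/-- Let `X` be a partial EFX allocation with unallocated item `g`, in a non-degenerate
additive instance, such that the envy-graph is acyclic and for every agent `i` some
agent `j` would EFX envy `i` if `i` were given `X_i ∪ {g}`. If the envy-graph has
exactly one source, then there is an EFX allocation `Y` Pareto dominating `X`. -/
theorem one_source_pareto_improvement {N ι : Type*} [Fintype N] [DecidableEq ι]
    (v : N → ι → ℝ) (hnn : ∀ i g, 0 ≤ v i g)
    (hnd : ∀ i : N, ∀ S T : Finset ι, S ≠ T → val (v i) S ≠ val (v i) T)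
    (M' : Finset ι) (X : N → Finset ι)
    (hXsub : ∀ i : N, X i ⊆ M')
    (hdisj : ∀ i j : N, i ≠ j → Disjoint (X i) (X j))
    (hEFX : ∀ i j : N, ∀ h ∈ X j, val (v i) ((X j).erase h) ≤ val (v i) (X i))
    (g : ι) (hg : g ∉ M')
    (hacyc : ¬ ∃ (k : ℕ) (c : Fin (k + 1) → N),
      ∀ t : Fin (k + 1), Envies v X (c t) (c (t + 1)))
    (henvy : ∀ i : N, ∃ j : N, ∃ h ∈ insert g (X i),
      val (v j) (X j) < val (v j) ((insert g (X i)).erase h))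
    (hsource : ∃! s : N, ∀ j : N, ¬ Envies v X j s) :
    ∃ Y : N → Finset ι,
      (∀ k : N, Y k ⊆ insert g M') ∧
      (∀ k l : N, k ≠ l → Disjoint (Y k) (Y l)) ∧
      (∀ k l : N, ∀ h ∈ Y l, val (v k) ((Y l).erase h) ≤ val (v k) (Y k)) ∧
      (∀ k : N, val (v k) (X k) ≤ val (v k) (Y k)) ∧
      (∃ k : N, val (v k) (X k) < val (v k) (Y k)) :=
  one_source_pareto_improvement_general v M' X hXsub hdisj hEFX g hg hacyc henvy hsource
end

section
/- Let X be a partial EFX allocation with all bundles nonempty, in a non-degenerate two-type instance with additive valuations v_α and v_β, such that the envy-graph E_X has more than one source. Let α_0 be the agent of type α with the α-minimum bundle and β_0 the agent of type β with the β-minimum bundle. Then v_α(X_{α_0}) > v_α(X_{β_0}) and v_β(X_{β_0}) > v_β(X_{α_0}). -/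
open Finset

/-!
Non-degeneracy turns every weak comparison between distinct bundles into a strict one. Hence an
agent `s` of type α other than `α₀` is envied by `α₀`, whose bundle is α-smaller, so `s` is not a
source; likewise for β. Two distinct sources must therefore be `α₀` and `β₀`, and since neither
envies the other, non-degeneracy again makes both stated inequalities strict.
-/

section EnvyGraph

variable {N ι : Type*} (v : N → ι → ℝ) (X : N → Finset ι)

def IsSource (s : N) : Prop := ∀ j : N, ¬ Envies v X j s

variable {v X}

theorem val_lt_of_not_envies {w : ι → ℝ} (hw : Function.Injective (val w)) {a b : N}
    (hX : X a ≠ X b) (hva : v a = w) (h : ¬ Envies v X a b) : val w (X b) < val w (X a) := by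
  rw [Envies, hva, not_lt] at h
  exact h.lt_of_ne (hw.ne hX.symm)

theorem IsSource.eq_of_le {w : ι → ℝ} (hw : Function.Injective (val w))
    (hX : Function.Injective X) {a s : N} (hs : IsSource v X s) (hva : v a = w)
    (hle : val w (X a) ≤ val w (X s)) : s = a := by
  by_contra hsa
  exact (val_lt_of_not_envies hw (hX.ne (Ne.symm hsa)) hva (hs a)).not_ge hle

end EnvyGraph

theorem and_of_ne_of_forall_eq_or_eq {α : Type*} {P : α → Prop} {a b s₁ s₂ : α} (hs : s₁ ≠ s₂)
    (h₁ : P s₁) (h₂ : P s₂) (hP : ∀ s, P s → s = a ∨ s = b) : P a ∧ P b := by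
  rcases hP s₁ h₁ with rfl | rfl <;> rcases hP s₂ h₂ with rfl | rfl
  exacts [absurd rfl hs, ⟨h₁, h₂⟩, ⟨h₂, h₁⟩, absurd rfl hs]

theorem min_agents_do_not_envy_each_other_general {N ι : Type*}
    (type : N → Bool) (va vb : ι → ℝ)
    (hnda : ∀ S T : Finset ι, S ≠ T → val va S ≠ val va T)
    (hndb : ∀ S T : Finset ι, S ≠ T → val vb S ≠ val vb T)
    (v : N → ι → ℝ) (hv : ∀ i : N, v i = if type i then va else vb)
    (X : N → Finset ι)
    (hdisj : ∀ i j : N, i ≠ j → Disjoint (X i) (X j))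
    (hne : ∀ i : N, (X i).Nonempty)
    (a0 b0 : N) (ha0 : type a0 = true) (hb0 : type b0 = false)
    (ha0min : ∀ i : N, type i = true → val va (X a0) ≤ val va (X i))
    (hb0min : ∀ i : N, type i = false → val vb (X b0) ≤ val vb (X i))
    (hsources : ∃ s1 s2 : N, s1 ≠ s2 ∧
      (∀ j : N, ¬ Envies v X j s1) ∧ (∀ j : N, ¬ Envies v X j s2)) :
    val va (X b0) < val va (X a0) ∧ val vb (X a0) < val vb (X b0) := by
  obtain ⟨s1, s2, hs, hs1, hs2⟩ := hsources
  have hinja : Function.Injective (val va) := fun S T => not_imp_not.1 (hnda S T)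
  have hinjb : Function.Injective (val vb) := fun S T => not_imp_not.1 (hndb S T)
  have hX : Function.Injective X := fun i j =>
    not_imp_not.1 fun hij => (hdisj i j hij).ne (hne i).ne_empty
  have hva : v a0 = va := by simp [hv, ha0]
  have hvb : v b0 = vb := by simp [hv, hb0]
  have hab : a0 ≠ b0 := fun h => by simp [h, hb0] at ha0
  have hsrc : ∀ s, IsSource v X s → s = a0 ∨ s = b0 := fun s hs => by
    cases hts : type s
    · exact .inr (hs.eq_of_le hinjb hX hvb (hb0min s hts))
    · exact .inl (hs.eq_of_le hinja hX hva (ha0min s hts))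
  obtain ⟨ha0src, hb0src⟩ := and_of_ne_of_forall_eq_or_eq hs hs1 hs2 hsrc
  exact ⟨val_lt_of_not_envies hinja (hX.ne hab) hva (hb0src a0),
    val_lt_of_not_envies hinjb (hX.ne hab.symm) hvb (ha0src b0)⟩

/-- In a non-degenerate two-type additive instance (at least two agents of each type),
if `X` is a partial EFX allocation with all bundles nonempty whose envy-graph has more
than one source, then the minimally endowed agents `α₀` of type α and `β₀` of type β
satisfy `v_α(X_{α₀}) > v_α(X_{β₀})` and `v_β(X_{β₀}) > v_β(X_{α₀})`. -/
theorem min_agents_do_not_envy_each_other {N ι : Type*} [Fintype N] [DecidableEq ι]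
    (type : N → Bool) (va vb : ι → ℝ)
    (hcarda : 2 ≤ (Finset.univ.filter fun i : N => type i = true).card)
    (hcardb : 2 ≤ (Finset.univ.filter fun i : N => type i = false).card)
    (hnda : ∀ S T : Finset ι, S ≠ T → val va S ≠ val va T)
    (hndb : ∀ S T : Finset ι, S ≠ T → val vb S ≠ val vb T)
    (v : N → ι → ℝ) (hv : ∀ i : N, v i = if type i then va else vb)
    (X : N → Finset ι)
    (hdisj : ∀ i j : N, i ≠ j → Disjoint (X i) (X j))
    (hEFX : ∀ i j : N, ∀ h ∈ X j, val (v i) ((X j).erase h) ≤ val (v i) (X i))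
    (hne : ∀ i : N, (X i).Nonempty)
    (a0 b0 : N) (ha0 : type a0 = true) (hb0 : type b0 = false)
    (ha0min : ∀ i : N, type i = true → val va (X a0) ≤ val va (X i))
    (hb0min : ∀ i : N, type i = false → val vb (X b0) ≤ val vb (X i))
    (hsources : ∃ s1 s2 : N, s1 ≠ s2 ∧
      (∀ j : N, ¬ Envies v X j s1) ∧ (∀ j : N, ¬ Envies v X j s2)) :
    val va (X b0) < val va (X a0) ∧ val vb (X a0) < val vb (X b0) :=
  min_agents_do_not_envy_each_other_general type va vb hnda hndb v hv X hdisj hne a0 b0 ha0 hb0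
    ha0min hb0min hsources
end

section
/- Let X be a partial EFX allocation with unallocated item g in a non-degenerate two-type additive instance (|N_α|, |N_β| ≥ 2) with no self-champions, and with more than one source in the envy-graph. Then α_0 is a most envious agent for X_{β_0} ∪ {g} and β_0 is a most envious agent for X_{α_0} ∪ {g}, i.e., α_0 ∈ A_X(X_{β_0} ∪ {g}) and β_0 ∈ A_X(X_{α_0} ∪ {g}). -/
/-!
Agents of one type share a valuation, so a most envious agent of type `α` for a set `S`
can be replaced by `α₀`: `α₀` values its own bundle no more than that agent values its,
and the same minimum preferred set works. Since `β₀` strictly prefers `X_{β₀} ∪ {g}` to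
`X_{β₀}`, that set has a most envious agent; it cannot be of type `β`, for otherwise `β₀`
would be a self-champion, so `α₀` is most envious for it. The other half is symmetric.
-/

open Finset

/-- `i` is a most envious agent for the set `S` under allocation `X`: some minimum
preferred set `P ⊆ S` of `i` has cardinality minimal among all agents' minimum
preferred sets of `S`. -/
def MostEnvious {N ι : Type*} (v : N → ι → ℝ) (X : N → Finset ι) (S : Finset ι)
    (i : N) : Prop :=
  ∃ P ⊆ S, val (v i) (X i) < val (v i) P ∧
    ∀ k : N, ∀ Q ⊆ S, val (v k) (X k) < val (v k) Q → P.card ≤ Q.card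

lemma val_lt_val_insert {ι : Type*} [DecidableEq ι] {w : ι → ℝ} {g : ι} {T : Finset ι}
    (hg0 : 0 ≤ w g) (hnd : ∀ S T : Finset ι, S ≠ T → val w S ≠ val w T) (hg : g ∉ T) :
    val w T < val w (insert g T) := by
  have hsum : val w (insert g T) = w g + val w T := sum_insert hg
  have hne : val w T ≠ val w (insert g T) :=
    hnd _ _ fun h => hg (h ▸ mem_insert_self g T)
  exact hne.lt_of_le (by linarith)

section MostEnvious

variable {N ι : Type*} {v : N → ι → ℝ} {X : N → Finset ι} {S : Finset ι}

lemma exists_mostEnvious (h : ∃ k, ∃ Q ⊆ S, val (v k) (X k) < val (v k) Q) :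
    ∃ k, MostEnvious v X S k := by
  classical
  have hex : ∃ n, ∃ k, ∃ Q ⊆ S, val (v k) (X k) < val (v k) Q ∧ Q.card = n :=
    let ⟨k, Q, hQS, hQ⟩ := h; ⟨Q.card, k, Q, hQS, hQ, rfl⟩
  obtain ⟨k, P, hPS, hP, hPcard⟩ := Nat.find_spec hex
  refine ⟨k, P, hPS, hP, fun k' Q hQS hQ => ?_⟩
  rw [hPcard]
  exact Nat.find_min' hex ⟨k', Q, hQS, hQ, rfl⟩

lemma MostEnvious.of_same_valuation {i k : N} (hk : MostEnvious v X S k) (hv : v k = v i)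
    (hle : val (v i) (X i) ≤ val (v i) (X k)) : MostEnvious v X S i := by
  obtain ⟨P, hPS, hP, hmin⟩ := hk
  rw [hv] at hP
  exact ⟨P, hPS, hle.trans_lt hP, hmin⟩

end MostEnvious

theorem min_agents_champion_each_other_general {N ι : Type*} [DecidableEq ι]
    (type : N → Bool) (va vb : ι → ℝ)
    (hnna : ∀ g, 0 ≤ va g) (hnnb : ∀ g, 0 ≤ vb g)
    (hnda : ∀ S T : Finset ι, S ≠ T → val va S ≠ val va T)
    (hndb : ∀ S T : Finset ι, S ≠ T → val vb S ≠ val vb T)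
    (v : N → ι → ℝ) (hv : ∀ i : N, v i = if type i then va else vb)
    (X : N → Finset ι)
    (g : ι) (hg : ∀ i : N, g ∉ X i)
    (hsc : ∀ i : N, ¬ MostEnvious v X (insert g (X i)) i)
    (a0 b0 : N) (ha0 : type a0 = true) (hb0 : type b0 = false)
    (ha0min : ∀ i : N, type i = true → val va (X a0) ≤ val va (X i))
    (hb0min : ∀ i : N, type i = false → val vb (X b0) ≤ val vb (X i)) :
    MostEnvious v X (insert g (X b0)) a0 ∧ MostEnvious v X (insert g (X a0)) b0 := by
  have hva : ∀ i, type i = true → v i = va := fun i hi => by simp [hv i, hi]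
  have hvb : ∀ i, type i = false → v i = vb := fun i hi => by simp [hv i, hi]
  have to_min : ∀ S k, MostEnvious v X S k → MostEnvious v X S a0 ∨ MostEnvious v X S b0 := by
    intro S k hk
    cases htk : type k
    · exact .inr <| hk.of_same_valuation (by rw [hvb k htk, hvb b0 hb0])
        (by simpa only [hvb b0 hb0] using hb0min k htk)
    · exact .inl <| hk.of_same_valuation (by rw [hva k htk, hva a0 ha0])
        (by simpa only [hva a0 ha0] using ha0min k htk)
  have gain : ∀ i, val (v i) (X i) < val (v i) (insert g (X i)) := by
    intro i
    rw [hv i]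
    split
    · exact val_lt_val_insert (hnna g) hnda (hg i)
    · exact val_lt_val_insert (hnnb g) hndb (hg i)
  obtain ⟨k, hk⟩ := exists_mostEnvious ⟨b0, _, Subset.refl _, gain b0⟩
  obtain ⟨k', hk'⟩ := exists_mostEnvious ⟨a0, _, Subset.refl _, gain a0⟩
  exact ⟨(to_min _ k hk).resolve_right (hsc b0), (to_min _ k' hk').resolve_left (hsc a0)⟩

/-- In a non-degenerate two-type additive instance (at least two agents of each type),
if `X` is a partial EFX allocation with nonempty bundles, unallocated item `g`, no
self-champions, and more than one source in the envy-graph, then `α₀` is a most envious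
agent for `X_{β₀} ∪ {g}` and `β₀` is a most envious agent for `X_{α₀} ∪ {g}`. -/
theorem min_agents_champion_each_other {N ι : Type*} [Fintype N] [DecidableEq ι]
    (type : N → Bool) (va vb : ι → ℝ)
    (hnna : ∀ g, 0 ≤ va g) (hnnb : ∀ g, 0 ≤ vb g)
    (hcarda : 2 ≤ (Finset.univ.filter fun i : N => type i = true).card)
    (hcardb : 2 ≤ (Finset.univ.filter fun i : N => type i = false).card)
    (hnda : ∀ S T : Finset ι, S ≠ T → val va S ≠ val va T)
    (hndb : ∀ S T : Finset ι, S ≠ T → val vb S ≠ val vb T)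
    (v : N → ι → ℝ) (hv : ∀ i : N, v i = if type i then va else vb)
    (X : N → Finset ι)
    (hdisj : ∀ i j : N, i ≠ j → Disjoint (X i) (X j))
    (hEFX : ∀ i j : N, ∀ h ∈ X j, val (v i) ((X j).erase h) ≤ val (v i) (X i))
    (hne : ∀ i : N, (X i).Nonempty)
    (g : ι) (hg : ∀ i : N, g ∉ X i)
    (hsc : ∀ i : N, ¬ MostEnvious v X (insert g (X i)) i)
    (a0 b0 : N) (ha0 : type a0 = true) (hb0 : type b0 = false)
    (ha0min : ∀ i : N, type i = true → val va (X a0) ≤ val va (X i))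
    (hb0min : ∀ i : N, type i = false → val vb (X b0) ≤ val vb (X i))
    (hsources : ∃ s1 s2 : N, s1 ≠ s2 ∧
      (∀ j : N, ¬ Envies v X j s1) ∧ (∀ j : N, ¬ Envies v X j s2)) :
    MostEnvious v X (insert g (X b0)) a0 ∧ MostEnvious v X (insert g (X a0)) b0 :=
  min_agents_champion_each_other_general type va vb hnna hnnb hnda hndb v hv X g hg hsc a0 b0 ha0
    hb0 ha0min hb0min
end

section
/- Define X'_{α_0} = (X_{α_0} ∪ P_X(α_0, X_{β_0} ∪ {g})) \ P_X(β_0, X_{α_0} ∪ {g}), X'_{β_0} = (X_{β_0} ∪ P_X(β_0, X_{α_0} ∪ {g})) \ P_X(α_0, X_{β_0} ∪ {g}), and X'_k = X_k otherwise. Under the standing assumptions (two-type additive non-degenerate instance, α_0 and β_0 champion each other, no self-champions, α_0 and β_0 are both sources), we have v_α(X'_{α_0}) > v_α(X_{α_0}) > v_α(X_{β_0}) > v_α(X'_{β_0}) and v_β(X'_{β_0}) > v_β(X_{β_0}) > v_β(X_{α_0}) > v_β(X'_{α_0}); in particular X' Pareto dominates X. -/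
open Finset

/-- `P` is a minimum preferred set of `S` for agent `i`, witnessing that `i` is a most
envious agent for `S`. -/
def MostEnviousWitness {N ι : Type*} (v : N → ι → ℝ) (X : N → Finset ι) (S : Finset ι)
    (i : N) (P : Finset ι) : Prop :=
  P ⊆ S ∧ val (v i) (X i) < val (v i) P ∧
    ∀ k : N, ∀ Q ⊆ S, val (v k) (X k) < val (v k) Q → P.card ≤ Q.card

/-!
Write `Pa = P_X(α₀, X_{β₀} ∪ {g})` and `Pb = P_X(β₀, X_{α₀} ∪ {g})`. Both contain `g`: otherwise
`Pa ⊆ X_{β₀}` and `α₀` would envy the source `β₀`. Since `α₀` is not a self-champion, it does not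
prefer `Pb`, a minimum preferred set of `X_{α₀} ∪ {g}`, to `X_{α₀}`. Hence
`v_α(Pb) ≤ v_α(X_{α₀}) < v_α(Pa)`, and by additivity the exchange changes `v_α` by
`v_α(Pa) - v_α(Pb) > 0` on `α₀`'s side and by its negative on `β₀`'s side; symmetrically for `v_β`.
-/

theorem val_mono {ι : Type*} {w : ι → ℝ} (hw : ∀ x, 0 ≤ w x) {S T : Finset ι} (hST : S ⊆ T) :
    val w S ≤ val w T :=
  sum_le_sum_of_subset_of_nonneg hST fun x _ _ => hw x

theorem val_union_sdiff {ι : Type*} [DecidableEq ι] (w : ι → ℝ) {A P Q : Finset ι}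
    (hAP : Disjoint A P) (hQ : Q ⊆ A ∪ P) :
    val w ((A ∪ P) \ Q) = val w A + val w P - val w Q := by
  have hunion : val w (A ∪ P) = val w A + val w P := sum_union hAP
  have hsplit : val w ((A ∪ P) \ Q) + val w Q = val w (A ∪ P) := sum_sdiff hQ
  linarith

theorem Finset.disjoint_of_subset_insert {ι : Type*} [DecidableEq ι] {A B P : Finset ι} {g : ι}
    (hAB : Disjoint A B) (hgA : g ∉ A) (hP : P ⊆ insert g B) : Disjoint A P :=
  (disjoint_insert_right.mpr ⟨hgA, hAB⟩).mono_right hP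

theorem Finset.subset_union_of_subset_insert {ι : Type*} [DecidableEq ι] {A Q P : Finset ι}
    {g : ι} (hgP : g ∈ P) (hQ : Q ⊆ insert g A) : Q ⊆ A ∪ P :=
  hQ.trans (insert_subset (mem_union_right A hgP) subset_union_left)

section Witness

variable {N ι : Type*} {v : N → ι → ℝ} {X : N → Finset ι} {g : ι}

theorem MostEnviousWitness.mem_of_not_envies [DecidableEq ι] {i j : N} {P : Finset ι}
    (hP : MostEnviousWitness v X (insert g (X j)) i P) (hnn : ∀ x, 0 ≤ v i x)
    (hij : ¬ Envies v X i j) : g ∈ P := by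
  by_contra hgP
  have hPX : P ⊆ X j := (subset_insert_iff_of_notMem hgP).mp hP.1
  exact hij (hP.2.1.trans_le (val_mono hnn hPX))

/-- The minimality clause of a witness does not mention the agent, so a witness for `k` would
also be one for `i` if `i` preferred it to its own bundle. -/
theorem MostEnviousWitness.val_le_of_forall_not {S P : Finset ι} {i k : N}
    (hP : MostEnviousWitness v X S k P) (hi : ∀ Q, ¬ MostEnviousWitness v X S i Q) :
    val (v i) P ≤ val (v i) (X i) :=
  not_lt.mp fun hlt => hi P ⟨hP.1, hlt, hP.2.2⟩

theorem val_exchange_lt [DecidableEq ι] {i j : N} {Pi Pj : Finset ι}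
    (hdisj : Disjoint (X i) (X j)) (hgi : g ∉ X i) (hgj : g ∉ X j)
    (hsc : ∀ Q, ¬ MostEnviousWitness v X (insert g (X i)) i Q)
    (hPi : MostEnviousWitness v X (insert g (X j)) i Pi)
    (hPj : MostEnviousWitness v X (insert g (X i)) j Pj) (hgPi : g ∈ Pi) (hgPj : g ∈ Pj) :
    val (v i) (X i) < val (v i) ((X i ∪ Pi) \ Pj) ∧
      val (v i) ((X j ∪ Pj) \ Pi) < val (v i) (X j) := by
  have hPjPi : val (v i) Pj < val (v i) Pi :=
    (hPj.val_le_of_forall_not hsc).trans_lt hPi.2.1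
  rw [val_union_sdiff _ (disjoint_of_subset_insert hdisj hgi hPi.1)
      (subset_union_of_subset_insert hgPi hPj.1),
    val_union_sdiff _ (disjoint_of_subset_insert hdisj.symm hgj hPj.1)
      (subset_union_of_subset_insert hgPj hPi.1)]
  constructor <;> linarith

end Witness

theorem val_lt_of_not_envies_s11 {N ι : Type*} {v : N → ι → ℝ} {X : N → Finset ι} {i j : N}
    (hnd : ∀ S T : Finset ι, S ≠ T → val (v i) S ≠ val (v i) T) (hij : Disjoint (X i) (X j))
    (hne : (X i).Nonempty) (hji : ¬ Envies v X i j) : val (v i) (X j) < val (v i) (X i) := by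
  have hXij : X j ≠ X i := fun h => hne.ne_empty (disjoint_self.mp (h ▸ hij))
  exact (not_lt.mp hji).lt_of_ne (hnd _ _ hXij)

theorem exchange_improves_both_general {N ι : Type*} [DecidableEq ι]
    (type : N → Bool) (va vb : ι → ℝ)
    (hnna : ∀ g, 0 ≤ va g) (hnnb : ∀ g, 0 ≤ vb g)
    (hnda : ∀ S T : Finset ι, S ≠ T → val va S ≠ val va T)
    (hndb : ∀ S T : Finset ι, S ≠ T → val vb S ≠ val vb T)
    (v : N → ι → ℝ) (hv : ∀ i : N, v i = if type i then va else vb)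
    (X : N → Finset ι)
    (hdisj : ∀ i j : N, i ≠ j → Disjoint (X i) (X j))
    (hne : ∀ i : N, (X i).Nonempty)
    (g : ι) (hg : ∀ i : N, g ∉ X i)
    (a0 b0 : N) (ha0 : type a0 = true) (hb0 : type b0 = false)
    (hsc : ∀ i : N, ∀ P : Finset ι, ¬ MostEnviousWitness v X (insert g (X i)) i P)
    (ha0src : ∀ j : N, ¬ Envies v X j a0) (hb0src : ∀ j : N, ¬ Envies v X j b0)
    (Pa Pb : Finset ι)
    (hPa : MostEnviousWitness v X (insert g (X b0)) a0 Pa)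
    (hPb : MostEnviousWitness v X (insert g (X a0)) b0 Pb)
    (X' : N → Finset ι)
    (hX'a : X' a0 = (X a0 ∪ Pa) \ Pb)
    (hX'b : X' b0 = (X b0 ∪ Pb) \ Pa)
    (hX'k : ∀ k : N, k ≠ a0 → k ≠ b0 → X' k = X k) :
    val va (X a0) < val va (X' a0) ∧ val va (X b0) < val va (X a0) ∧
    val va (X' b0) < val va (X b0) ∧
    val vb (X b0) < val vb (X' b0) ∧ val vb (X a0) < val vb (X b0) ∧
    val vb (X' a0) < val vb (X a0) ∧
    ((∀ i : N, val (v i) (X i) ≤ val (v i) (X' i)) ∧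
      ∃ j : N, val (v j) (X j) < val (v j) (X' j)) := by
  have hva : v a0 = va := by simp [hv, ha0]
  have hvb : v b0 = vb := by simp [hv, hb0]
  have hab : a0 ≠ b0 := fun h => by simp [h, hb0] at ha0
  have hgPa := hPa.mem_of_not_envies (hva ▸ hnna) (hb0src a0)
  have hgPb := hPb.mem_of_not_envies (hvb ▸ hnnb) (ha0src b0)
  obtain ⟨hgain_a, hloss_a⟩ :=
    val_exchange_lt (hdisj _ _ hab) (hg a0) (hg b0) (hsc a0) hPa hPb hgPa hgPb
  obtain ⟨hgain_b, hloss_b⟩ :=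
    val_exchange_lt (hdisj _ _ hab.symm) (hg b0) (hg a0) (hsc b0) hPb hPa hgPb hgPa
  have hlt_a := val_lt_of_not_envies_s11 (hva ▸ hnda) (hdisj _ _ hab) (hne a0) (hb0src a0)
  have hlt_b := val_lt_of_not_envies_s11 (hvb ▸ hndb) (hdisj _ _ hab.symm) (hne b0) (ha0src b0)
  rw [hX'a, hX'b, ← hva, ← hvb]
  refine ⟨hgain_a, hlt_a, hloss_a, hgain_b, hlt_b, hloss_b, fun i => ?_, a0, hX'a ▸ hgain_a⟩
  by_cases hia : i = a0
  · rw [hia, hX'a]; exact hgain_a.le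
  by_cases hib : i = b0
  · rw [hib, hX'b]; exact hgain_b.le
  rw [hX'k i hia hib]

/-- Exchanging the minimum preferred sets `Pa = P_X(α₀, X_{β₀} ∪ {g})` and
`Pb = P_X(β₀, X_{α₀} ∪ {g})` between `α₀` and `β₀` strictly improves both of their
utilities: `v_α(X'_{α₀}) > v_α(X_{α₀}) > v_α(X_{β₀}) > v_α(X'_{β₀})` and
`v_β(X'_{β₀}) > v_β(X_{β₀}) > v_β(X_{α₀}) > v_β(X'_{α₀})`; in particular `X'` Pareto
dominates `X`. -/
theorem exchange_improves_both {N ι : Type*} [Fintype N] [DecidableEq N] [DecidableEq ι]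
    (type : N → Bool) (va vb : ι → ℝ)
    (hnna : ∀ g, 0 ≤ va g) (hnnb : ∀ g, 0 ≤ vb g)
    (hcarda : 2 ≤ (Finset.univ.filter fun i : N => type i = true).card)
    (hcardb : 2 ≤ (Finset.univ.filter fun i : N => type i = false).card)
    (hnda : ∀ S T : Finset ι, S ≠ T → val va S ≠ val va T)
    (hndb : ∀ S T : Finset ι, S ≠ T → val vb S ≠ val vb T)
    (v : N → ι → ℝ) (hv : ∀ i : N, v i = if type i then va else vb)
    (X : N → Finset ι)
    (hdisj : ∀ i j : N, i ≠ j → Disjoint (X i) (X j))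
    (hEFX : ∀ i j : N, ∀ h ∈ X j, val (v i) ((X j).erase h) ≤ val (v i) (X i))
    (hne : ∀ i : N, (X i).Nonempty)
    (g : ι) (hg : ∀ i : N, g ∉ X i)
    (a0 b0 : N) (ha0 : type a0 = true) (hb0 : type b0 = false)
    (ha0min : ∀ i : N, type i = true → val va (X a0) ≤ val va (X i))
    (hb0min : ∀ i : N, type i = false → val vb (X b0) ≤ val vb (X i))
    (hsc : ∀ i : N, ∀ P : Finset ι, ¬ MostEnviousWitness v X (insert g (X i)) i P)
    (ha0src : ∀ j : N, ¬ Envies v X j a0) (hb0src : ∀ j : N, ¬ Envies v X j b0)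
    (Pa Pb : Finset ι)
    (hPa : MostEnviousWitness v X (insert g (X b0)) a0 Pa)
    (hPb : MostEnviousWitness v X (insert g (X a0)) b0 Pb)
    (X' : N → Finset ι)
    (hX'a : X' a0 = (X a0 ∪ Pa) \ Pb)
    (hX'b : X' b0 = (X b0 ∪ Pb) \ Pa)
    (hX'k : ∀ k : N, k ≠ a0 → k ≠ b0 → X' k = X k) :
    val va (X a0) < val va (X' a0) ∧ val va (X b0) < val va (X a0) ∧
    val va (X' b0) < val va (X b0) ∧
    val vb (X b0) < val vb (X' b0) ∧ val vb (X a0) < val vb (X b0) ∧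
    val vb (X' a0) < val vb (X a0) ∧
    ((∀ i : N, val (v i) (X i) ≤ val (v i) (X' i)) ∧
      ∃ j : N, val (v j) (X j) < val (v j) (X' j)) :=
  exchange_improves_both_general type va vb hnna hnnb hnda hndb v hv X hdisj hne g hg a0 b0 ha0 hb0
    hsc ha0src hb0src Pa Pb hPa hPb X' hX'a hX'b hX'k
end

section
/- Suppose all n agents share a single additive valuation v and X = (X_1,...,X_n) is a complete EFX allocation with respect to v. Given a second additive valuation w and one distinguished agent a, the allocation that gives agent a the bundle X_k maximizing w(X_k) and distributes the remaining bundles arbitrarily among the other agents is EFX when agent a has valuation w and all other agents have valuation v. -/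
open Finset

lemma val_le_val_of_subset {ι : Type*} {v : ι → ℝ} (hv : ∀ g, 0 ≤ v g)
    {S T : Finset ι} (hST : S ⊆ T) :
    val v S ≤ val v T :=
  sum_le_sum_of_subset_of_nonneg hST fun g _ _ => hv g

lemma val_erase_le {ι : Type*} [DecidableEq ι] {v : ι → ℝ} (hv : ∀ g, 0 ≤ v g)
    (S : Finset ι) (h : ι) : val v (S.erase h) ≤ val v S :=
  val_le_val_of_subset hv (erase_subset h S)

theorem identical_plus_one_efx_general {N ι : Type*} [DecidableEq N] [DecidableEq ι]
    (v w : ι → ℝ) (hnnw : ∀ g, 0 ≤ w g)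
    (X : N → Finset ι)
    (hEFX : ∀ i j : N, ∀ h ∈ X j, val v ((X j).erase h) ≤ val v (X i))
    (a k : N) (hk : ∀ j : N, val w (X j) ≤ val w (X k))
    (σ : Equiv.Perm N) (hσ : σ a = k) :
    ∀ i j : N, ∀ h ∈ X (σ j),
      val (if i = a then w else v) ((X (σ j)).erase h) ≤
        val (if i = a then w else v) (X (σ i)) := by
  intro i j h hh
  rcases eq_or_ne i a with rfl | hi
  · -- `i` holds a `w`-maximal bundle, so it envies nobody at all
    rw [if_pos rfl, hσ]
    exact (val_erase_le hnnw _ h).trans (hk _)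
  · rw [if_neg hi]
    exact hEFX (σ i) (σ j) h hh

/-- Suppose all agents share one additive valuation `v` and `X` is a complete EFX
allocation for `v`. Given a second additive valuation `w` and a distinguished agent
`a`, any reassignment of the bundles (via a permutation `σ`) that gives `a` the
`w`-maximum bundle `X k` is EFX when `a` has valuation `w` and everyone else has `v`. -/
theorem identical_plus_one_efx {N ι : Type*} [Fintype N] [DecidableEq N] [DecidableEq ι]
    (v w : ι → ℝ) (hnnv : ∀ g, 0 ≤ v g) (hnnw : ∀ g, 0 ≤ w g)
    (X : N → Finset ι)
    (hdisj : ∀ i j : N, i ≠ j → Disjoint (X i) (X j))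
    (hcomp : ∀ g : ι, ∃ i : N, g ∈ X i)
    (hEFX : ∀ i j : N, ∀ h ∈ X j, val v ((X j).erase h) ≤ val v (X i))
    (a k : N) (hk : ∀ j : N, val w (X j) ≤ val w (X k))
    (σ : Equiv.Perm N) (hσ : σ a = k) :
    ∀ i j : N, ∀ h ∈ X (σ j),
      val (if i = a then w else v) ((X (σ j)).erase h) ≤
        val (if i = a then w else v) (X (σ i)) :=
  identical_plus_one_efx_general v w hnnw X hEFX a k hk σ hσ
end

section
/- Let X be a partial allocation in a two-type additive instance, with α_0, β_0 the minimally endowed agents of types α, β, and suppose: v_α(X'_{α_0}) > v_α(X_{α_0}) > v_α(X_{β_0}) > v_α(X'_{β_0}) and v_β(X'_{β_0}) > v_β(X_{β_0}) > v_β(X_{α_0}) > v_β(X'_{α_0}) for the exchanged allocation X'. Define X'' by shrinking X'_{α_0} to P_{X'}(α_1, X'_{α_0}) if α_1 EFX envies α_0 in X' (else keep X'_{α_0}), and symmetrically for β_0, leaving all other bundles unchanged. Then X'' Pareto dominates X and X'' is EFX. -/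
/-!
The minimally endowed agent `α₀` gains: her new bundle is either all of `X'_{α₀}`, which she
prefers to `X_{α₀}`, or a set that `α₁` values above `X_{α₁}`, where
`v_α(X_{α₁}) > v_α(X_{α₀})`.
Symmetrically `β₀` gains, and every other bundle is unchanged.

Nobody EFX envies the new bundle of `α₀`. An `α`-agent other than `α₀` owns at least
`v_α(X_{α₁})`, while by minimality a minimum preferred set of `α₁` is worth at most that to her
once any good is removed (and if `α₁` did not EFX envy `α₀`, the bundle was not shrunk).
A `β`-agent owns at least `v_β(X_{β₀}) > v_β(X'_{α₀})`, and the new bundle is a subset of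
`X'_{α₀}`. The same holds for `β₀`, and towards the other agents the EFX property of `X`
survives because no agent lost value.
-/

open Finset

/-- `i` EFX envies `j` under allocation `X`. -/
def EFXEnvies {N ι : Type*} [DecidableEq ι] (v : N → ι → ℝ) (X : N → Finset ι)
    (i j : N) : Prop :=
  ∃ h ∈ X j, val (v i) (X i) < val (v i) ((X j).erase h)

theorem val_mono_of_nonneg {ι : Type*} {w : ι → ℝ} (hw : ∀ g, 0 ≤ w g) {S T : Finset ι}
    (hST : S ⊆ T) : val w S ≤ val w T :=
  sum_le_sum_of_subset_of_nonneg hST fun g _ _ => hw g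

section Shrinking

variable {N ι : Type*} [DecidableEq ι]

theorem val_erase_le_of_forall_card_le {w : ι → ℝ} {A P : Finset ι} {t : ℝ} (hAP : A ⊆ P)
    (hmin : ∀ Q ⊆ P, t < val w Q → A.card ≤ Q.card) {h : ι} (hh : h ∈ A) :
    val w (A.erase h) ≤ t := by
  by_contra! hlt
  have hcard := hmin _ ((erase_subset h A).trans hAP) hlt
  rw [card_erase_of_mem hh] at hcard
  have hpos : 0 < A.card := card_pos.2 ⟨h, hh⟩
  omega

/-- `A` is `X j` shrunk to a minimum preferred set `P_X(i, X j)` if `i` EFX envies `j`, and `X j`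
itself otherwise; `w` stands for the valuation `v i` of `i`. -/
def IsShrunkBundle (v : N → ι → ℝ) (w : ι → ℝ) (X : N → Finset ι) (i j : N) (A : Finset ι) :
    Prop :=
  (EFXEnvies v X i j ∧ A ⊆ X j ∧ val w (X i) < val w A ∧
      ∀ Q ⊆ X j, val w (X i) < val w Q → A.card ≤ Q.card) ∨
    (¬ EFXEnvies v X i j ∧ A = X j)

namespace IsShrunkBundle

variable {v : N → ι → ℝ} {w : ι → ℝ} {X : N → Finset ι} {i j : N} {A : Finset ι}

theorem subset (hA : IsShrunkBundle v w X i j A) : A ⊆ X j := by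
  rcases hA with ⟨-, hsub, -⟩ | ⟨-, rfl⟩
  exacts [hsub, Subset.rfl]

theorem lt_val (hA : IsShrunkBundle v w X i j A) {c : ℝ} (hci : c ≤ val w (X i))
    (hcj : c < val w (X j)) : c < val w A := by
  rcases hA with ⟨-, -, hlt, -⟩ | ⟨-, rfl⟩
  exacts [hci.trans_lt hlt, hcj]

theorem val_erase_le (hA : IsShrunkBundle v w X i j A) (hw : v i = w) :
    ∀ h ∈ A, val w (A.erase h) ≤ val w (X i) := by
  rcases hA with ⟨-, hsub, -, hmin⟩ | ⟨hnot, rfl⟩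
  · exact fun h hh => val_erase_le_of_forall_card_le hsub hmin hh
  · simpa only [EFXEnvies, hw, not_exists, not_and, not_lt] using hnot

theorem val_erase_le_of_le (hA : IsShrunkBundle v w X i j A) (hw : v i = w) {u w' : ι → ℝ}
    (hw' : ∀ g, 0 ≤ w' g) {Y : Finset ι}
    (hY : (u = w ∧ val w (X i) ≤ val w Y) ∨ (u = w' ∧ val w' (X j) ≤ val w' Y)) :
    ∀ h ∈ A, val u (A.erase h) ≤ val u Y := by
  intro h hh
  rcases hY with ⟨rfl, hY⟩ | ⟨rfl, hY⟩
  · exact (hA.val_erase_le hw h hh).trans hY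
  · calc val u (A.erase h) ≤ val u (X j) :=
          val_mono_of_nonneg hw' ((erase_subset h A).trans hA.subset)
      _ ≤ val u Y := hY

end IsShrunkBundle

end Shrinking

theorem shrunk_allocation_efx_general {N ι : Type*} [DecidableEq N] [DecidableEq ι]
    (type : N → Bool) (va vb : ι → ℝ)
    (hnna : ∀ g, 0 ≤ va g) (hnnb : ∀ g, 0 ≤ vb g)
    (v : N → ι → ℝ) (hv : ∀ i : N, v i = if type i then va else vb)
    (X : N → Finset ι)
    (hEFX : ∀ i j : N, ∀ h ∈ X j, val (v i) ((X j).erase h) ≤ val (v i) (X i))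
    (a0 a1 b0 b1 : N)
    (ha0 : type a0 = true) (ha1 : type a1 = true) (ha01 : a0 ≠ a1)
    (hb0 : type b0 = false) (hb1 : type b1 = false) (hb01 : b0 ≠ b1)
    (ha0min : ∀ i : N, type i = true → val va (X a0) ≤ val va (X i))
    (ha1ord : val va (X a0) < val va (X a1))
    (ha1min : ∀ i : N, type i = true → i ≠ a0 → val va (X a1) ≤ val va (X i))
    (hb0min : ∀ i : N, type i = false → val vb (X b0) ≤ val vb (X i))
    (hb1ord : val vb (X b0) < val vb (X b1))
    (hb1min : ∀ i : N, type i = false → i ≠ b0 → val vb (X b1) ≤ val vb (X i))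
    (X' : N → Finset ι)
    (hX'k : ∀ k : N, k ≠ a0 → k ≠ b0 → X' k = X k)
    (hchain_a : val va (X' b0) < val va (X b0) ∧ val va (X b0) < val va (X a0) ∧
      val va (X a0) < val va (X' a0))
    (hchain_b : val vb (X' a0) < val vb (X a0) ∧ val vb (X a0) < val vb (X b0) ∧
      val vb (X b0) < val vb (X' b0))
    (A'' B'' : Finset ι)
    (hA : (EFXEnvies v X' a1 a0 ∧ A'' ⊆ X' a0 ∧ val va (X' a1) < val va A'' ∧
        (∀ Q ⊆ X' a0, val va (X' a1) < val va Q → A''.card ≤ Q.card)) ∨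
      (¬ EFXEnvies v X' a1 a0 ∧ A'' = X' a0))
    (hB : (EFXEnvies v X' b1 b0 ∧ B'' ⊆ X' b0 ∧ val vb (X' b1) < val vb B'' ∧
        (∀ Q ⊆ X' b0, val vb (X' b1) < val vb Q → B''.card ≤ Q.card)) ∨
      (¬ EFXEnvies v X' b1 b0 ∧ B'' = X' b0))
    (X'' : N → Finset ι)
    (hX''a : X'' a0 = A'') (hX''b : X'' b0 = B'')
    (hX''k : ∀ k : N, k ≠ a0 → k ≠ b0 → X'' k = X' k) :
    ((∀ i : N, val (v i) (X i) ≤ val (v i) (X'' i)) ∧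
      ∃ j : N, val (v j) (X j) < val (v j) (X'' j)) ∧
    (∀ i j : N, ∀ h ∈ X'' j, val (v i) ((X'' j).erase h) ≤ val (v i) (X'' i)) := by
  have hA : IsShrunkBundle v va X' a1 a0 A'' := hA
  have hB : IsShrunkBundle v vb X' b1 b0 B'' := hB
  have hva : ∀ i, type i = true → v i = va := fun i hi => by simp [hv, hi]
  have hvb : ∀ i, type i = false → v i = vb := fun i hi => by simp [hv, hi]
  have hX'a1 : X' a1 = X a1 := hX'k a1 ha01.symm (ne_of_apply_ne type (by rw [ha1, hb0]; decide))
  have hX'b1 : X' b1 = X b1 := hX'k b1 (ne_of_apply_ne type (by rw [hb1, ha0]; decide)) hb01.symm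
  have ha0_gain : val va (X a0) < val va A'' := hA.lt_val (hX'a1 ▸ ha1ord.le) hchain_a.2.2
  have hb0_gain : val vb (X b0) < val vb B'' := hB.lt_val (hX'b1 ▸ hb1ord.le) hchain_b.2.2
  have hgain : ∀ i, val (v i) (X i) ≤ val (v i) (X'' i) := by
    intro i
    by_cases hia : i = a0
    · subst hia; rw [hX''a, hva _ ha0]; exact ha0_gain.le
    by_cases hib : i = b0
    · subst hib; rw [hX''b, hvb _ hb0]; exact hb0_gain.le
    rw [hX''k i hia hib, hX'k i hia hib]
  have hno_envy : ∀ i j, i ≠ j → ∀ h ∈ X'' j,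
      val (v i) ((X'' j).erase h) ≤ val (v i) (X i) := by
    intro i j hij
    by_cases hja : j = a0
    · subst hja
      rw [hX''a]
      refine hA.val_erase_le_of_le (hva _ ha1) hnnb ?_
      cases hi : type i
      · exact .inr ⟨hvb i hi, (hchain_b.1.trans hchain_b.2.1).le.trans (hb0min i hi)⟩
      · exact .inl ⟨hva i hi, hX'a1 ▸ ha1min i hi hij⟩
    by_cases hjb : j = b0
    · subst hjb
      rw [hX''b]
      refine hB.val_erase_le_of_le (hvb _ hb1) hnna ?_
      cases hi : type i
      · exact .inl ⟨hvb i hi, hX'b1 ▸ hb1min i hi hij⟩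
      · exact .inr ⟨hva i hi, (hchain_a.1.trans hchain_a.2.1).le.trans (ha0min i hi)⟩
    rw [hX''k j hja hjb, hX'k j hja hjb]
    exact hEFX i j
  refine ⟨⟨hgain, a0, by rw [hX''a, hva _ ha0]; exact ha0_gain⟩, fun i j h hh => ?_⟩
  obtain rfl | hij := eq_or_ne i j
  · have hnn : ∀ g, 0 ≤ v i g := fun g => by rw [hv]; split; exacts [hnna g, hnnb g]
    exact val_mono_of_nonneg hnn (erase_subset h _)
  · exact (hno_envy i j hij h hh).trans (hgain i)

/-- Elimination of EFX envy: given the exchanged allocation `X'` satisfying the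
inequality chains `v_α(X'_{α₀}) > v_α(X_{α₀}) > v_α(X_{β₀}) > v_α(X'_{β₀})` and
`v_β(X'_{β₀}) > v_β(X_{β₀}) > v_β(X_{α₀}) > v_β(X'_{α₀})`, shrink `X'_{α₀}` to the
minimum preferred set `P_{X'}(α₁, X'_{α₀})` if `α₁` EFX envies `α₀` in `X'` (else keep
it), and symmetrically for `β₀`. The resulting allocation `X''` Pareto dominates `X`
and is EFX. -/
theorem shrunk_allocation_efx {N ι : Type*} [DecidableEq N] [DecidableEq ι]
    (type : N → Bool) (va vb : ι → ℝ)
    (hnna : ∀ g, 0 ≤ va g) (hnnb : ∀ g, 0 ≤ vb g)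
    (hnda : ∀ S T : Finset ι, S ≠ T → val va S ≠ val va T)
    (hndb : ∀ S T : Finset ι, S ≠ T → val vb S ≠ val vb T)
    (v : N → ι → ℝ) (hv : ∀ i : N, v i = if type i then va else vb)
    (X : N → Finset ι)
    (hdisj : ∀ i j : N, i ≠ j → Disjoint (X i) (X j))
    (hEFX : ∀ i j : N, ∀ h ∈ X j, val (v i) ((X j).erase h) ≤ val (v i) (X i))
    (a0 a1 b0 b1 : N)
    (ha0 : type a0 = true) (ha1 : type a1 = true) (ha01 : a0 ≠ a1)
    (hb0 : type b0 = false) (hb1 : type b1 = false) (hb01 : b0 ≠ b1)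
    (ha0min : ∀ i : N, type i = true → val va (X a0) ≤ val va (X i))
    (ha1ord : val va (X a0) < val va (X a1))
    (ha1min : ∀ i : N, type i = true → i ≠ a0 → val va (X a1) ≤ val va (X i))
    (hb0min : ∀ i : N, type i = false → val vb (X b0) ≤ val vb (X i))
    (hb1ord : val vb (X b0) < val vb (X b1))
    (hb1min : ∀ i : N, type i = false → i ≠ b0 → val vb (X b1) ≤ val vb (X i))
    (X' : N → Finset ι)
    (hX'k : ∀ k : N, k ≠ a0 → k ≠ b0 → X' k = X k)
    (hchain_a : val va (X' b0) < val va (X b0) ∧ val va (X b0) < val va (X a0) ∧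
      val va (X a0) < val va (X' a0))
    (hchain_b : val vb (X' a0) < val vb (X a0) ∧ val vb (X a0) < val vb (X b0) ∧
      val vb (X b0) < val vb (X' b0))
    (A'' B'' : Finset ι)
    (hA : (EFXEnvies v X' a1 a0 ∧ A'' ⊆ X' a0 ∧ val va (X' a1) < val va A'' ∧
        (∀ Q ⊆ X' a0, val va (X' a1) < val va Q → A''.card ≤ Q.card)) ∨
      (¬ EFXEnvies v X' a1 a0 ∧ A'' = X' a0))
    (hB : (EFXEnvies v X' b1 b0 ∧ B'' ⊆ X' b0 ∧ val vb (X' b1) < val vb B'' ∧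
        (∀ Q ⊆ X' b0, val vb (X' b1) < val vb Q → B''.card ≤ Q.card)) ∨
      (¬ EFXEnvies v X' b1 b0 ∧ B'' = X' b0))
    (X'' : N → Finset ι)
    (hX''a : X'' a0 = A'') (hX''b : X'' b0 = B'')
    (hX''k : ∀ k : N, k ≠ a0 → k ≠ b0 → X'' k = X' k) :
    ((∀ i : N, val (v i) (X i) ≤ val (v i) (X'' i)) ∧
      ∃ j : N, val (v j) (X j) < val (v j) (X'' j)) ∧
    (∀ i j : N, ∀ h ∈ X'' j, val (v i) ((X'' j).erase h) ≤ val (v i) (X'' i)) :=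
  shrunk_allocation_efx_general type va vb hnna hnnb v hv X hEFX a0 a1 b0 b1 ha0 ha1 ha01 hb0 hb1
    hb01 ha0min ha1ord ha1min hb0min hb1ord hb1min X' hX'k hchain_a hchain_b A'' B'' hA hB X'' hX''a
    hX''b hX''k
end
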